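/- Let (g, ω) be a symplectic Lie algebra with compatible left-symmetric product ∘, L_x(y) = x∘y, R_x(y) = y∘x, ∇_x = (2/3)·L_x - (1/3)·R_x, and curvature R(x,y) = ∇_x ∘ ∇_y - ∇_y ∘ ∇_x - ∇_{[x,y]}. Define the Ricci tensor ric(x, y) = tr(z ↦ R(x, z)y). Then for all x, y ∈ g: ric(x, y) = (1/9)·( tr(L_{x∘y}) + tr(L_x ∘ L_y) ). In particular, if the Lie algebra g is nilpotent, then ric = 0. -/

import Mathlib

noncomputable section

variable {g : Type*} [LieRing g] [LieAlgebra ℝ g]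

/-- The torsion free symplectic connection `∇_x = (2/3)·L_x - (1/3)·R_x` associated to a
left-symmetric product `P` (`P x y = x∘y`, so `L_x = P x` and `R_x = P.flip x`). -/
def nabla (P : g →ₗ[ℝ] g →ₗ[ℝ] g) (x : g) : Module.End ℝ g :=
  (2/3 : ℝ) • P x - (1/3 : ℝ) • P.flip x

/-- The curvature `R(x,y) = ∇_x∇_y - ∇_y∇_x - ∇_{[x,y]}` of `∇`. -/
def curv (P : g →ₗ[ℝ] g →ₗ[ℝ] g) (x y : g) : Module.End ℝ g :=
  nabla P x ∘ₗ nabla P y - nabla P y ∘ₗ nabla P x - nabla P ⁅x, y⁆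

/-- The linear map `z ↦ ∇_z y`. -/
def nablaR (P : g →ₗ[ℝ] g →ₗ[ℝ] g) (y : g) : Module.End ℝ g :=
  (2/3 : ℝ) • P.flip y - (1/3 : ℝ) • P y

/-- The linear map `z ↦ R(x,z)y`, whose trace is the Ricci curvature `ric(x,y)`. -/
def ricOp (P : g →ₗ[ℝ] g →ₗ[ℝ] g) (x y : g) : Module.End ℝ g :=
  nabla P x ∘ₗ nablaR P y - nablaR P (nabla P x y)
    - nablaR P y ∘ₗ LieAlgebra.ad ℝ g x


/-!
The defining identity `ω(x∘y, z) = -ω(y, [x,z])` says that `L_x` has `ω`-adjoint `R_x - L_x`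
and that `R_x` is `ω`-self-adjoint; since `ω`-adjoint endomorphisms have equal traces, this gives
`tr R_x = 2 tr L_x` and, with left-symmetry `R_{x∘y} = R_y R_x - R_y L_x + L_x R_y`, it expresses
the traces of all products of two of `L_x, R_x, L_y, R_y` through `tr L_{x∘y}` and
`tr (L_x L_y)`. Expanding `z ↦ R(x,z)y` then yields the formula. The same bookkeeping shows that
the Killing form is `tr (L_x L_y)` and that `tr L_x = -tr (ad x)`, both of which vanish when
`g` is nilpotent.
-/

namespace LinearMap

variable {K V : Type*} [Field K] [AddCommGroup V] [Module K V] [FiniteDimensional K V]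
  {ω : V →ₗ[K] V →ₗ[K] K}

theorem IsAdjointPair.trace_eq (hω : ω.SeparatingLeft) {A B : Module.End K V}
    (h : IsAdjointPair ω ω A B) : trace K V A = trace K V B := by
  let e : V ≃ₗ[K] Module.Dual K V := ω.linearEquivOfInjective
    (ker_eq_bot.mp (separatingLeft_iff_ker_eq_bot.mp hω)) Subspace.dual_finrank_eq.symm
  have hconj : e.conj A = Module.Dual.transpose B := by
    ext f w
    obtain ⟨z, rfl⟩ := e.surjective f
    rw [LinearEquiv.conj_apply_apply, LinearEquiv.symm_apply_apply]
    exact h z w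
  rw [← trace_conj' A e, hconj, trace_transpose']

theorem IsAdjointPair.trace_comp_eq (hω : ω.SeparatingLeft) {A A' B B' : Module.End K V}
    (hA : IsAdjointPair ω ω A A') (hB : IsAdjointPair ω ω B B') :
    trace K V (A ∘ₗ B) = trace K V (B' ∘ₗ A') :=
  trace_eq hω (hB.comp hA)

end LinearMap

open LinearMap

section LeftSymmetric

variable {ω : g →ₗ[ℝ] g →ₗ[ℝ] ℝ} {P : g →ₗ[ℝ] g →ₗ[ℝ] g}

theorem ad_eq_sub_flip (hcomp : ∀ x y : g, P x y - P y x = ⁅x, y⁆) (x : g) :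
    (LieAlgebra.ad ℝ g x : Module.End ℝ g) = P x - P.flip x := by
  ext z
  exact (hcomp x z).symm

theorem isAdjointPair_left (hdef : ∀ x y z : g, ω (P x y) z = - ω y ⁅x, z⁆)
    (hcomp : ∀ x y : g, P x y - P y x = ⁅x, y⁆) (x : g) :
    IsAdjointPair ω ω (P x) ⇑(P.flip x - P x) := by
  intro z w
  rw [hdef, ← hcomp x w, LinearMap.sub_apply, flip_apply, map_sub, map_sub]
  ring

theorem isAdjointPair_flip (halt : ω.IsAlt) (hdef : ∀ x y z : g, ω (P x y) z = - ω y ⁅x, z⁆)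
    (x : g) : IsAdjointPair ω ω (P.flip x) (P.flip x) := by
  intro z w
  rw [flip_apply, flip_apply, ← halt.neg (P w x) z, hdef, hdef, ← lie_skew z w, map_neg]

theorem flip_left_apply (hls : ∀ x y z : g, P (P x y) z - P x (P y z) = P (P y x) z - P y (P x z))
    (x y : g) :
    P.flip (P x y) = P.flip y ∘ₗ P.flip x - P.flip y ∘ₗ P x + P x ∘ₗ P.flip y := by
  ext z
  simp only [LinearMap.sub_apply, LinearMap.add_apply, comp_apply, flip_apply]
  linear_combination (norm := module) -hls z x y

theorem left_sub_left_comp_left_comm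
    (hls : ∀ x y z : g, P (P x y) z - P x (P y z) = P (P y x) z - P y (P x z)) (x y : g) :
    P (P x y) - P x ∘ₗ P y = P (P y x) - P y ∘ₗ P x := by
  ext z
  exact hls x y z

variable [FiniteDimensional ℝ g]

local notation "tr" => trace ℝ g

theorem trace_flip (hω : ω.SeparatingLeft) (hdef : ∀ x y z : g, ω (P x y) z = - ω y ⁅x, z⁆)
    (hcomp : ∀ x y : g, P x y - P y x = ⁅x, y⁆) (x : g) :
    tr (P.flip x) = 2 * tr (P x) := by
  have h := (isAdjointPair_left hdef hcomp x).trace_eq hω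
  rw [map_sub] at h
  linarith

theorem trace_left_left_comm
    (hls : ∀ x y z : g, P (P x y) z - P x (P y z) = P (P y x) z - P y (P x z)) (x y : g) :
    tr (P (P x y)) = tr (P (P y x)) := by
  have h := congrArg tr (left_sub_left_comp_left_comm hls x y)
  rw [map_sub, map_sub, trace_comp_comm' (P x) (P y)] at h
  linarith

theorem two_mul_trace_left_comp_flip (hω : ω.SeparatingLeft) (halt : ω.IsAlt)
    (hdef : ∀ x y z : g, ω (P x y) z = - ω y ⁅x, z⁆)
    (hcomp : ∀ x y : g, P x y - P y x = ⁅x, y⁆) (x y : g) :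
    2 * tr (P x ∘ₗ P.flip y) = tr (P.flip x ∘ₗ P.flip y) := by
  have h := (isAdjointPair_left hdef hcomp x).trace_comp_eq hω (isAdjointPair_flip halt hdef y)
  rw [comp_sub, map_sub, trace_comp_comm' (P.flip x), trace_comp_comm' (P x)] at h
  linarith

theorem trace_flip_comp_flip (hω : ω.SeparatingLeft)
    (hdef : ∀ x y z : g, ω (P x y) z = - ω y ⁅x, z⁆) (hcomp : ∀ x y : g, P x y - P y x = ⁅x, y⁆)
    (hls : ∀ x y z : g, P (P x y) z - P x (P y z) = P (P y x) z - P y (P x z)) (x y : g) :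
    tr (P.flip x ∘ₗ P.flip y) = 2 * tr (P (P x y)) := by
  have h := trace_flip hω hdef hcomp (P x y)
  rw [flip_left_apply hls, map_add, map_sub, trace_comp_comm' (P.flip x),
    trace_comp_comm' (P x)] at h
  linarith

theorem trace_left_comp_flip (hω : ω.SeparatingLeft) (halt : ω.IsAlt)
    (hdef : ∀ x y z : g, ω (P x y) z = - ω y ⁅x, z⁆) (hcomp : ∀ x y : g, P x y - P y x = ⁅x, y⁆)
    (hls : ∀ x y z : g, P (P x y) z - P x (P y z) = P (P y x) z - P y (P x z)) (x y : g) :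
    tr (P x ∘ₗ P.flip y) = tr (P (P x y)) := by
  linarith [two_mul_trace_left_comp_flip hω halt hdef hcomp x y,
    trace_flip_comp_flip hω hdef hcomp hls x y]

theorem trace_flip_comp_left (hω : ω.SeparatingLeft) (halt : ω.IsAlt)
    (hdef : ∀ x y z : g, ω (P x y) z = - ω y ⁅x, z⁆) (hcomp : ∀ x y : g, P x y - P y x = ⁅x, y⁆)
    (hls : ∀ x y z : g, P (P x y) z - P x (P y z) = P (P y x) z - P y (P x z)) (x y : g) :
    tr (P.flip x ∘ₗ P y) = tr (P (P x y)) := by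
  have h := (isAdjointPair_left hdef hcomp x).trace_comp_eq hω (isAdjointPair_left hdef hcomp y)
  rw [comp_sub, sub_comp, sub_comp, map_sub, map_sub, map_sub, trace_comp_comm' (P x) (P y),
    trace_comp_comm' (P.flip x) (P y), trace_comp_comm' (P x) (P.flip y),
    trace_comp_comm' (P.flip x) (P.flip y)] at h
  linarith [trace_left_comp_flip hω halt hdef hcomp hls x y,
    trace_flip_comp_flip hω hdef hcomp hls x y]

theorem trace_ricOp (hω : ω.SeparatingLeft) (halt : ω.IsAlt)
    (hdef : ∀ x y z : g, ω (P x y) z = - ω y ⁅x, z⁆) (hcomp : ∀ x y : g, P x y - P y x = ⁅x, y⁆)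
    (hls : ∀ x y z : g, P (P x y) z - P x (P y z) = P (P y x) z - P y (P x z)) (x y : g) :
    tr (ricOp P x y) = (1/9 : ℝ) * (tr (P (P x y)) + tr (P x ∘ₗ P y)) := by
  rw [ricOp, map_sub, map_sub, trace_comp_comm' (LieAlgebra.ad ℝ g x), ad_eq_sub_flip hcomp]
  simp only [nabla, nablaR, comp_sub, sub_comp, comp_smul, smul_comp, map_sub, map_smul,
    smul_eq_mul, LinearMap.sub_apply, LinearMap.smul_apply, flip_apply, trace_flip hω hdef hcomp]
  linarith [trace_left_comp_flip hω halt hdef hcomp hls x y,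
    trace_flip_comp_left hω halt hdef hcomp hls x y, trace_flip_comp_flip hω hdef hcomp hls x y,
    trace_left_left_comm hls x y]

theorem killingForm_eq_trace_left_comp_left (hω : ω.SeparatingLeft) (halt : ω.IsAlt)
    (hdef : ∀ x y z : g, ω (P x y) z = - ω y ⁅x, z⁆) (hcomp : ∀ x y : g, P x y - P y x = ⁅x, y⁆)
    (hls : ∀ x y z : g, P (P x y) z - P x (P y z) = P (P y x) z - P y (P x z)) (x y : g) :
    killingForm ℝ g x y = tr (P x ∘ₗ P y) := by
  rw [killingForm_apply_apply, ad_eq_sub_flip hcomp, ad_eq_sub_flip hcomp]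
  simp only [comp_sub, sub_comp, map_sub]
  linarith [trace_left_comp_flip hω halt hdef hcomp hls x y,
    trace_flip_comp_left hω halt hdef hcomp hls x y, trace_flip_comp_flip hω hdef hcomp hls x y]

theorem trace_left_eq_zero_of_isNilpotent [LieRing.IsNilpotent g] (hω : ω.SeparatingLeft)
    (hdef : ∀ x y z : g, ω (P x y) z = - ω y ⁅x, z⁆) (hcomp : ∀ x y : g, P x y - P y x = ⁅x, y⁆)
    (x : g) : tr (P x) = 0 := by
  have h : tr (LieAlgebra.ad ℝ g x) = 0 :=
    (isNilpotent_trace_of_isNilpotent (LieModule.isNilpotent_toEnd_of_isNilpotent ℝ g g x)).eq_zero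
  rw [ad_eq_sub_flip hcomp, map_sub, trace_flip hω hdef hcomp] at h
  linarith

end LeftSymmetric

theorem symplectic_lie_algebra_ricci_formula_general
    [FiniteDimensional ℝ g]
    (ω : g →ₗ[ℝ] g →ₗ[ℝ] ℝ)
    (halt : ∀ x : g, ω x x = 0)
    (hnondeg : ∀ x : g, (∀ y : g, ω x y = 0) → x = 0)
    (P : g →ₗ[ℝ] g →ₗ[ℝ] g)
    (hdef : ∀ x y z : g, ω (P x y) z = - ω y ⁅x, z⁆)
    (hls : ∀ x y z : g, P (P x y) z - P x (P y z) = P (P y x) z - P y (P x z))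
    (hcomp : ∀ x y : g, P x y - P y x = ⁅x, y⁆) :
    (∀ x y : g,
      (∀ z : g, ricOp P x y z = curv P x z y) ∧
      LinearMap.trace ℝ g (ricOp P x y) =
        (1/9 : ℝ) * (LinearMap.trace ℝ g (P (P x y)) +
          LinearMap.trace ℝ g (P x ∘ₗ P y))) ∧
    (LieRing.IsNilpotent g →
      ∀ x y : g, LinearMap.trace ℝ g (ricOp P x y) = 0) := by
  refine ⟨fun x y ↦ ⟨fun z ↦ rfl, trace_ricOp hnondeg halt hdef hcomp hls x y⟩, fun _ x y ↦ ?_⟩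
  have hκ : killingForm ℝ g = 0 := LieModule.traceForm_eq_zero_of_isNilpotent ℝ g g
  rw [trace_ricOp hnondeg halt hdef hcomp hls, trace_left_eq_zero_of_isNilpotent hnondeg hdef hcomp,
    ← killingForm_eq_trace_left_comp_left hnondeg halt hdef hcomp hls, hκ, LinearMap.zero_apply,
    LinearMap.zero_apply]
  norm_num

/-- Ricci curvature formula for the natural connection of a symplectic Lie
algebra, and Ricci flatness in the nilpotent case. -/
theorem symplectic_lie_algebra_ricci_formula
    [FiniteDimensional ℝ g]
    (ω : g →ₗ[ℝ] g →ₗ[ℝ] ℝ)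
    (halt : ∀ x : g, ω x x = 0)
    (hnondeg : ∀ x : g, (∀ y : g, ω x y = 0) → x = 0)
    (hcocycle : ∀ x y z : g, ω ⁅x, y⁆ z + ω ⁅y, z⁆ x + ω ⁅z, x⁆ y = 0)
    (P : g →ₗ[ℝ] g →ₗ[ℝ] g)
    (hdef : ∀ x y z : g, ω (P x y) z = - ω y ⁅x, z⁆)
    (hls : ∀ x y z : g, P (P x y) z - P x (P y z) = P (P y x) z - P y (P x z))
    (hcomp : ∀ x y : g, P x y - P y x = ⁅x, y⁆) :
    (∀ x y : g,
      (∀ z : g, ricOp P x y z = curv P x z y) ∧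
      LinearMap.trace ℝ g (ricOp P x y) =
        (1/9 : ℝ) * (LinearMap.trace ℝ g (P (P x y)) +
          LinearMap.trace ℝ g (P x ∘ₗ P y))) ∧
    (LieRing.IsNilpotent g →
      ∀ x y : g, LinearMap.trace ℝ g (ricOp P x y) = 0) :=
  symplectic_lie_algebra_ricci_formula_general ω halt hnondeg P hdef hls hcomp
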